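/- arXiv:2601.00253 — 3 statements merged into one kernel-verified Lean document; each statement's English description precedes it below -/
import Mathlib

section
/- Let S be a staircase complex over F₂[W,Z] with bigrading (gr_W, gr_Z) determined by: the variables satisfy (gr_W, gr_Z)(W) = (−2, 0) and (gr_W, gr_Z)(Z) = (0, −2), and the generators x₀, …, x_{2n} are homogeneous with the differential homogeneous of degree (−1,−1). If φ: S → S is a homogeneous F₂[W,Z]-module map of bidegree (m, m) for some m ≥ 1, then φ = 0. -/
noncomputable section

open MvPolynomial

/-- `R = F₂[W,Z]`. -/
abbrev R2 : Type := MvPolynomial (Fin 2) (ZMod 2)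

def Wv : R2 := X 0
def Zv : R2 := X 1

/-- Coefficient of the monomial `W^p Z^q`. -/
def coeffAt (p q : ℕ) (f : R2) : ZMod 2 :=
  MvPolynomial.coeff (Finsupp.single (0 : Fin 2) p + Finsupp.single (1 : Fin 2) q) f

/-- The staircase differential as an endomorphism matrix of the total module on
generators `x_0, …, x_{2n}`: `d(x_{2i+1}) = x_{2i}·W^{a_i} + x_{2i+2}·Z^{b_i}`,
`d(x_{2i}) = 0`. -/
def stairD (n : ℕ) (a b : Fin n → ℕ) :
    Matrix (Fin (2 * n + 1)) (Fin (2 * n + 1)) R2 :=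
  fun j i =>
    if h : (i : ℕ) % 2 = 1 then
      if (j : ℕ) + 1 = (i : ℕ) then Wv ^ a ⟨(i : ℕ) / 2, by have := i.isLt; omega⟩
      else if (j : ℕ) = (i : ℕ) + 1 then Zv ^ b ⟨(i : ℕ) / 2, by have := i.isLt; omega⟩
      else 0
    else 0

/-- A matrix `M` (representing an `R`-module map) is homogeneous of bidegree `(dW, dZ)`
with respect to generator bigradings, where `W` has bidegree `(−2,0)` and `Z` has
`(0,−2)`: every monomial `W^p Z^q` occurring in the `(j,i)` entry satisfies the
corresponding grading equations. -/
def hasBideg {k l : ℕ} (grWs grZs : Fin k → ℤ) (grWt grZt : Fin l → ℤ)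
    (dW dZ : ℤ) (M : Matrix (Fin l) (Fin k) R2) : Prop :=
  ∀ (i : Fin k) (j : Fin l) (p q : ℕ), coeffAt p q (M j i) ≠ 0 →
    grWt j - 2 * (p : ℤ) = grWs i + dW ∧ grZt j - 2 * (q : ℤ) = grZs i + dZ

/-! The differential has the nonzero entries `W^{a_i}` and `Z^{b_i}`, so its homogeneity forces
`gr_W` to decrease and `gr_Z` to increase strictly along `x₀, …, x_{2n}`. A nonzero monomial
`W^p Z^q` in the `(j, i)` entry of a map of bidegree `(m, m)`, `m ≥ 1`, would raise both gradings
from `x_i` to `x_j`, i.e. force both `j < i` and `i < j`. -/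

lemma coeffAt_eq_coeff (d : Fin 2 →₀ ℕ) (f : R2) : coeffAt (d 0) (d 1) f = coeff d f := by
  unfold coeffAt
  congr 1
  ext x
  fin_cases x <;> simp

lemma coeffAt_Wv_pow (c : ℕ) : coeffAt c 0 (Wv ^ c) = 1 := by
  simp [coeffAt, Wv, coeff_X_pow]

lemma coeffAt_Zv_pow (c : ℕ) : coeffAt 0 c (Zv ^ c) = 1 := by
  simp [coeffAt, Zv, coeff_X_pow]

section Staircase

variable {n : ℕ} {a b : Fin n → ℕ}

lemma stairD_apply_W (c : ℕ) (hc : c < n) :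
    stairD n a b ⟨2 * c, by omega⟩ ⟨2 * c + 1, by omega⟩ = Wv ^ a ⟨c, hc⟩ := by
  simp only [stairD, Nat.mul_add_mod_self_left, dite_true, if_true]
  congr 3
  omega

lemma stairD_apply_Z (c : ℕ) (hc : c < n) :
    stairD n a b ⟨2 * c + 1 + 1, by omega⟩ ⟨2 * c + 1, by omega⟩ = Zv ^ b ⟨c, hc⟩ := by
  simp only [stairD, Nat.mul_add_mod_self_left, dite_true, if_true]
  rw [if_neg (by omega)]
  congr 3
  omega

variable {grW grZ : Fin (2 * n + 1) → ℤ}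

lemma stairD_grading_step (ha : ∀ i, 0 < a i) (hb : ∀ i, 0 < b i)
    (hD : hasBideg grW grZ grW grZ (-1) (-1) (stairD n a b)) (k : ℕ) (hk : k + 1 < 2 * n + 1) :
    grW ⟨k + 1, hk⟩ < grW ⟨k, by omega⟩ ∧ grZ ⟨k, by omega⟩ < grZ ⟨k + 1, hk⟩ := by
  obtain ⟨c, rfl | rfl⟩ := Nat.even_or_odd' k
  · have hc : c < n := by omega
    obtain ⟨hW, hZ⟩ := hD _ _ (a ⟨c, hc⟩) 0 (by
      rw [stairD_apply_W c hc, coeffAt_Wv_pow]; exact one_ne_zero)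
    have := ha ⟨c, hc⟩
    omega
  · have hc : c < n := by omega
    obtain ⟨hW, hZ⟩ := hD _ _ 0 (b ⟨c, hc⟩) (by
      rw [stairD_apply_Z c hc, coeffAt_Zv_pow]; exact one_ne_zero)
    have := hb ⟨c, hc⟩
    omega

lemma stairD_strictAnti_grW (ha : ∀ i, 0 < a i) (hb : ∀ i, 0 < b i)
    (hD : hasBideg grW grZ grW grZ (-1) (-1) (stairD n a b)) : StrictAnti grW :=
  Fin.strictAnti_iff_succ_lt.mpr fun k => (stairD_grading_step ha hb hD k (by omega)).1

lemma stairD_strictMono_grZ (ha : ∀ i, 0 < a i) (hb : ∀ i, 0 < b i)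
    (hD : hasBideg grW grZ grW grZ (-1) (-1) (stairD n a b)) : StrictMono grZ :=
  Fin.strictMono_iff_lt_succ.mpr fun k => (stairD_grading_step ha hb hD k (by omega)).2

end Staircase

lemma eq_zero_of_hasBideg {k : ℕ} {grW grZ : Fin k → ℤ} (hW : StrictAnti grW)
    (hZ : StrictMono grZ) {dW dZ : ℤ} (hdW : 0 < dW) (hdZ : 0 ≤ dZ)
    {M : Matrix (Fin k) (Fin k) R2} (hM : hasBideg grW grZ grW grZ dW dZ M) : M = 0 := by
  ext j i d
  by_contra hne
  obtain ⟨hj, hi⟩ := hM i j (d 0) (d 1) (by rwa [coeffAt_eq_coeff])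
  have hji : j < i := hW.lt_iff_gt.mp (by omega)
  have hij : i ≤ j := hZ.le_iff_le.mp (by omega)
  exact hji.not_ge hij

/-- If `S` is a bigraded staircase complex over `F₂[W,Z]` (generators homogeneous,
differential homogeneous of bidegree `(−1,−1)`, with `a_i, b_i > 0`), then any
homogeneous `F₂[W,Z]`-module map `φ : S → S` of bidegree `(m, m)` with `m ≥ 1`
is zero. -/
theorem stmt_5 (n : ℕ) (a b : Fin n → ℕ) (ha : ∀ i, 0 < a i) (hb : ∀ i, 0 < b i)
    (grW grZ : Fin (2 * n + 1) → ℤ)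
    (hD : hasBideg grW grZ grW grZ (-1) (-1) (stairD n a b))
    (m : ℤ) (hm : 1 ≤ m)
    (C : Matrix (Fin (2 * n + 1)) (Fin (2 * n + 1)) R2)
    (hC : hasBideg grW grZ grW grZ m m C) :
    C = 0 :=
  eq_zero_of_hasBideg (stairD_strictAnti_grW ha hb hD) (stairD_strictMono_grZ ha hb hD)
    (by omega) (by omega) hC
end
end

section
/- Let S be a bigraded staircase complex over F₂[W,Z]. Then every chain map f: S → S of bidegree (−1, −1) is null-homotopic. -/
noncomputable section

open MvPolynomial

/-!
The bidegree of `f` pins down its shape. Since `f` and `d` both shift `gr_W` by an odd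
amount, the parity of `gr_W + index` and the strict monotonicity of `gr_W`, `gr_Z` along the
staircase force every nonzero entry of `f` to join neighbouring generators. Entries out of an
even generator vanish by the chain condition, because `d` is injective on the span of the odd
generators; every other entry has the same single monomial as the corresponding entry of `d`.
So `f = c ⊙ d` for a scalar matrix `c`, and in characteristic 2 such a matrix equals
`dH + Hd` for the diagonal `H` whose entries are the partial sums of `c` along the staircase.
-/

open Matrix

lemma Wv_pow_mul_Zv_pow (p q : ℕ) :
    Wv ^ p * Zv ^ q = monomial (Finsupp.single 0 p + Finsupp.single 1 q) (1 : ZMod 2) := by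
  rw [Wv, Zv, X_pow_eq_monomial, X_pow_eq_monomial, monomial_mul, one_mul]

lemma coeffAt_Wv_pow_mul_Zv_pow (p q p₀ q₀ : ℕ) :
    coeffAt p q (Wv ^ p₀ * Zv ^ q₀) = if p = p₀ ∧ q = q₀ then 1 else 0 := by
  rw [Wv_pow_mul_Zv_pow, coeffAt, coeff_monomial]
  congr 1
  refine propext ⟨fun h => ?_, fun ⟨hp, hq⟩ => by rw [hp, hq]⟩
  have h0 := DFunLike.congr_fun h 0
  have h1 := DFunLike.congr_fun h 1
  simp only [Finsupp.add_apply, Finsupp.single_apply] at h0 h1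
  norm_num at h0 h1
  exact ⟨h0.symm, h1.symm⟩

lemma coeffAt_C_mul (p q : ℕ) (c : ZMod 2) (f : R2) :
    coeffAt p q (C c * f) = c * coeffAt p q f :=
  coeff_C_mul _ _ _

lemma ext_coeffAt {f g : R2} (h : ∀ p q, coeffAt p q f = coeffAt p q g) : f = g := by
  refine MvPolynomial.ext _ _ fun m => ?_
  have hm : m = Finsupp.single 0 (m 0) + Finsupp.single 1 (m 1) := by
    ext x; fin_cases x <;> simp
  rw [hm]
  exact h _ _

lemma eq_C_mul_of_coeffAt_ne_zero {f : R2} {p₀ q₀ : ℕ}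
    (h : ∀ p q, coeffAt p q f ≠ 0 → p = p₀ ∧ q = q₀) :
    f = C (coeffAt p₀ q₀ f) * (Wv ^ p₀ * Zv ^ q₀) := by
  refine ext_coeffAt fun p q => ?_
  rw [coeffAt_C_mul, coeffAt_Wv_pow_mul_Zv_pow]
  by_cases hpq : p = p₀ ∧ q = q₀
  · rw [if_pos hpq, mul_one, hpq.1, hpq.2]
  · rw [if_neg hpq, mul_zero]
    exact not_not.mp (mt (h p q) hpq)

lemma exists_coeffAt_ne_zero {f : R2} (hf : f ≠ 0) : ∃ p q, coeffAt p q f ≠ 0 := by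
  by_contra! h
  exact hf (ext_coeffAt fun p q => by rw [h p q]; rfl)

namespace hasBideg

variable {k l : ℕ} {grWs grZs : Fin k → ℤ} {grWt grZt : Fin l → ℤ} {dW dZ : ℤ}
  {M N : Matrix (Fin l) (Fin k) R2} {i : Fin k} {j : Fin l}

lemma exists_of_apply_ne_zero (hM : hasBideg grWs grZs grWt grZt dW dZ M) (h : M j i ≠ 0) :
    ∃ p q : ℕ, grWt j - 2 * (p : ℤ) = grWs i + dW ∧ grZt j - 2 * (q : ℤ) = grZs i + dZ := by
  obtain ⟨p, q, hpq⟩ := exists_coeffAt_ne_zero h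
  exact ⟨p, q, hM i j p q hpq⟩

lemma degree_eqs_of_apply_eq (hM : hasBideg grWs grZs grWt grZt dW dZ M) {p q : ℕ}
    (h : M j i = Wv ^ p * Zv ^ q) :
    grWt j - 2 * (p : ℤ) = grWs i + dW ∧ grZt j - 2 * (q : ℤ) = grZs i + dZ :=
  hM i j p q (by rw [h, coeffAt_Wv_pow_mul_Zv_pow, if_pos ⟨rfl, rfl⟩]; exact one_ne_zero)

lemma exists_apply_eq_C_mul (hM : hasBideg grWs grZs grWt grZt dW dZ M)
    (hN : hasBideg grWs grZs grWt grZt dW dZ N) {p₀ q₀ : ℕ} (h : M j i = Wv ^ p₀ * Zv ^ q₀) :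
    ∃ c, N j i = C c * M j i := by
  have h₀ := hM.degree_eqs_of_apply_eq h
  rw [h]
  refine ⟨_, eq_C_mul_of_coeffAt_ne_zero fun p q hpq => ?_⟩
  have := hN i j p q hpq
  omega

end hasBideg

def IsStairGrading {N : ℕ} (gW gZ : Fin (N + 1) → ℤ) : Prop :=
  ∀ l : Fin N, ∃ p q : ℕ, 0 < p ∧ 0 < q ∧
    gW l.succ = gW l.castSucc + 1 - 2 * p ∧ gZ l.succ = gZ l.castSucc - 1 + 2 * q

namespace IsStairGrading

variable {N : ℕ} {gW gZ : Fin (N + 1) → ℤ}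

lemma strictAnti (hg : IsStairGrading gW gZ) : StrictAnti gW :=
  Fin.strictAnti_iff_succ_lt.2 fun l => by obtain ⟨p, q, hp, -, hW, -⟩ := hg l; omega

lemma strictMono (hg : IsStairGrading gW gZ) : StrictMono gZ :=
  Fin.strictMono_iff_lt_succ.2 fun l => by obtain ⟨p, q, -, hq, -, hZ⟩ := hg l; omega

lemma emod_two (hg : IsStairGrading gW gZ) (i : Fin (N + 1)) : (gW i + i) % 2 = gW 0 % 2 := by
  induction i using Fin.induction with
  | zero => simp
  | succ l ih =>
    obtain ⟨p, -, -, -, hW, -⟩ := hg l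
    rw [Fin.val_succ, hW]
    rw [Fin.val_castSucc] at ih
    omega

end IsStairGrading

/-- Parity of `gr_W + index` rules out the diagonal; monotonicity of the gradings rules out
jumps of two or more. -/
lemma hasBideg.adjacent_of_apply_ne_zero {N : ℕ} {gW gZ : Fin (N + 1) → ℤ}
    {M : Matrix (Fin (N + 1)) (Fin (N + 1)) R2} (hM : hasBideg gW gZ gW gZ (-1) (-1) M)
    (hg : IsStairGrading gW gZ) {j i : Fin (N + 1)} (h : M j i ≠ 0) :
    (j : ℕ) + 1 = i ∨ (j : ℕ) = i + 1 := by
  obtain ⟨p, q, hp, hq⟩ := hM.exists_of_apply_ne_zero h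
  have hj := hg.emod_two j
  have hi := hg.emod_two i
  have hW : (i : ℕ) + 1 < j → gW j + 2 ≤ gW i := fun hij => by
    let i' : Fin (N + 1) := ⟨i + 1, by omega⟩
    have h₁ := hg.strictAnti (show i < i' from Fin.mk_lt_mk.2 (by omega))
    have h₂ := hg.strictAnti (show i' < j from Fin.mk_lt_mk.2 (by omega))
    omega
  have hZ : (j : ℕ) + 1 < i → gZ j + 2 ≤ gZ i := fun hji => by
    let j' : Fin (N + 1) := ⟨j + 1, by omega⟩
    have h₁ := hg.strictMono (show j < j' from Fin.mk_lt_mk.2 (by omega))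
    have h₂ := hg.strictMono (show j' < i from Fin.mk_lt_mk.2 (by omega))
    omega
  omega

theorem exists_hadamard_eq_mul_diagonal_add_diagonal_mul {A : Type*} [CommRing A] [CharP A 2]
    {N : ℕ} (c D : Matrix (Fin (N + 1)) (Fin (N + 1)) A)
    (hD : ∀ j i, D j i ≠ 0 → Odd (i : ℕ) ∧ ((j : ℕ) + 1 = i ∨ (j : ℕ) = i + 1)) :
    ∃ h : Fin (N + 1) → A, c ⊙ D = D * diagonal h + diagonal h * D := by
  -- the entry of `D` joining `l` and `l + 1` lies in the odd one of the two columns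
  let e : Fin N → A := fun l =>
    if Even (l : ℕ) then c l.castSucc l.succ else c l.succ l.castSucc
  refine ⟨Fin.partialSum e, ext fun j i => ?_⟩
  suffices D j i ≠ 0 → c j i = Fin.partialSum e i + Fin.partialSum e j by
    simp only [hadamard_apply, Matrix.add_apply, mul_diagonal, diagonal_mul]
    by_cases hji : D j i = 0
    · simp [hji]
    · rw [this hji]; ring
  intro hji
  obtain ⟨hi, hj | hj⟩ := hD j i hji
  · obtain ⟨l, rfl, rfl⟩ : ∃ l : Fin N, l.castSucc = j ∧ l.succ = i :=
      ⟨⟨j, by omega⟩, rfl, Fin.ext hj⟩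
    have hl : Even (l : ℕ) := by simpa [Nat.odd_add_one] using hi
    rw [Fin.partialSum_succ, add_right_comm, CharTwo.add_self_eq_zero, zero_add]
    simp [e, hl]
  · obtain ⟨l, rfl, rfl⟩ : ∃ l : Fin N, l.succ = j ∧ l.castSucc = i :=
      ⟨⟨i, by omega⟩, Fin.ext hj.symm, rfl⟩
    have hl : ¬ Even (l : ℕ) := by simpa using hi
    rw [Fin.partialSum_succ, ← add_assoc, CharTwo.add_self_eq_zero, zero_add]
    simp [e, hl]

section Staircase

variable {n : ℕ} {a b : Fin n → ℕ} {j i : Fin (2 * n + 1)}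

lemma stairD_apply_eq_Wv_pow {k : Fin n} (hj : (j : ℕ) = 2 * k) (hi : (i : ℕ) = 2 * k + 1) :
    stairD n a b j i = Wv ^ a k := by
  rw [stairD, dif_pos (by omega), if_pos (by omega)]
  congr 2
  ext
  simp only
  omega

lemma stairD_apply_eq_Zv_pow {k : Fin n} (hj : (j : ℕ) = 2 * k + 2) (hi : (i : ℕ) = 2 * k + 1) :
    stairD n a b j i = Zv ^ b k := by
  rw [stairD, dif_pos (by omega), if_neg (by omega), if_pos (by omega)]
  congr 2
  ext
  simp only
  omega

lemma stairD_apply_ne_zero_iff :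
    stairD n a b j i ≠ 0 ↔ Odd (i : ℕ) ∧ ((j : ℕ) + 1 = i ∨ (j : ℕ) = i + 1) := by
  constructor
  · intro h
    unfold stairD at h
    split_ifs at h with hi hj hj'
    exacts [⟨Nat.odd_iff.2 hi, .inl hj⟩, ⟨Nat.odd_iff.2 hi, .inr hj'⟩, absurd rfl h, absurd rfl h]
  · rintro ⟨⟨r, hr⟩, h | h⟩
    · rw [stairD_apply_eq_Wv_pow (k := ⟨r, by omega⟩) (by simp; omega) hr]
      exact pow_ne_zero _ (X_ne_zero _)
    · rw [stairD_apply_eq_Zv_pow (k := ⟨r, by omega⟩) (by simp; omega) hr]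
      exact pow_ne_zero _ (X_ne_zero _)

lemma isStairGrading_of_hasBideg_stairD (ha : ∀ i, 0 < a i) (hb : ∀ i, 0 < b i)
    {grW grZ : Fin (2 * n + 1) → ℤ} (hD : hasBideg grW grZ grW grZ (-1) (-1) (stairD n a b)) :
    IsStairGrading grW grZ := by
  intro l
  obtain ⟨r, hr | hr⟩ := Nat.even_or_odd' l
  · let k : Fin n := ⟨r, by omega⟩
    obtain ⟨hW, hZ⟩ :=
      hD.degree_eqs_of_apply_eq (j := l.castSucc) (i := l.succ) (p := a k) (q := 0)
      (by rw [stairD_apply_eq_Wv_pow (k := k) (by simp [k, hr]) (by simp [k, hr]), pow_zero,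
        mul_one])
    exact ⟨_, 1, ha k, one_pos, by omega, by omega⟩
  · let k : Fin n := ⟨r, by omega⟩
    obtain ⟨hW, hZ⟩ :=
      hD.degree_eqs_of_apply_eq (j := l.succ) (i := l.castSucc) (p := 0) (q := b k)
      (by rw [stairD_apply_eq_Zv_pow (k := k) (by simp [k, hr]) (by simp [k, hr]), pow_zero,
        one_mul])
    exact ⟨1, _, one_pos, hb k, by omega, by omega⟩

/-- Induction on `k`: the row of `x_{2k}` reads `W^{a_k} v_{2k+1} + Z^{b_{k-1}} v_{2k-1} = 0`. -/
lemma apply_eq_zero_of_stairD_mulVec_eq_zero {v : Fin (2 * n + 1) → R2}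
    (hv : stairD n a b *ᵥ v = 0) (hi : Odd (i : ℕ)) : v i = 0 := by
  obtain ⟨m, hm⟩ : ∃ m, (i : ℕ) = m := ⟨_, rfl⟩
  induction m using Nat.strong_induction_on generalizing i with
  | _ m ih =>
    obtain ⟨r, hr⟩ := hi
    obtain ⟨j, hj⟩ : ∃ j : Fin (2 * n + 1), (j : ℕ) = 2 * r := ⟨⟨2 * r, by omega⟩, rfl⟩
    have hrow : (stairD n a b *ᵥ v) j = stairD n a b j i * v i := by
      refine Finset.sum_eq_single i (fun y _ hy => ?_) (absurd (Finset.mem_univ i))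
      change stairD n a b j y * v y = 0
      by_cases hjy : stairD n a b j y = 0
      · rw [hjy, zero_mul]
      obtain ⟨hy', hjy' | hjy'⟩ := stairD_apply_ne_zero_iff.1 hjy
      · exact absurd (Fin.ext (by omega)) hy
      · rw [ih _ (by omega) hy' rfl, mul_zero]
    rw [hv, Pi.zero_apply, eq_comm, stairD_apply_eq_Wv_pow (k := ⟨r, by omega⟩) hj hr] at hrow
    exact (mul_eq_zero.1 hrow).resolve_left (pow_ne_zero _ (X_ne_zero _))

end Staircase

section ChainMap

variable {n : ℕ} {a b : Fin n → ℕ} {f : Matrix (Fin (2 * n + 1)) (Fin (2 * n + 1)) R2}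

lemma apply_eq_zero_of_mul_stairD_eq {j i : Fin (2 * n + 1)}
    (hchain : f * stairD n a b = stairD n a b * f) (hi : Even (i : ℕ)) (hj : Odd (j : ℕ)) :
    f j i = 0 := by
  refine apply_eq_zero_of_stairD_mulVec_eq_zero (a := a) (b := b) (v := fun k => f k i)
    (funext fun r => ?_) hj
  change (stairD n a b * f) r i = 0
  rw [← hchain, Matrix.mul_apply]
  refine Finset.sum_eq_zero fun k _ => ?_
  rw [of_not_not (mt (fun h => (stairD_apply_ne_zero_iff.1 h).1) (Nat.not_odd_iff_even.2 hi)),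
    mul_zero]

lemma exists_map_C_hadamard_stairD_eq (ha : ∀ i, 0 < a i) (hb : ∀ i, 0 < b i)
    {grW grZ : Fin (2 * n + 1) → ℤ} (hD : hasBideg grW grZ grW grZ (-1) (-1) (stairD n a b))
    (hf : hasBideg grW grZ grW grZ (-1) (-1) f) (hchain : f * stairD n a b = stairD n a b * f) :
    ∃ c : Matrix (Fin (2 * n + 1)) (Fin (2 * n + 1)) (ZMod 2), f = c.map C ⊙ stairD n a b := by
  have hg := isStairGrading_of_hasBideg_stairD ha hb hD
  have hentry : ∀ j i, ∃ c, f j i = C c * stairD n a b j i := by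
    intro j i
    by_cases hfji : f j i = 0
    · exact ⟨0, by rw [hfji, map_zero, zero_mul]⟩
    have hadj := hf.adjacent_of_apply_ne_zero hg hfji
    rcases Nat.even_or_odd' i with ⟨r, hr | hr⟩
    · exact absurd (apply_eq_zero_of_mul_stairD_eq hchain ⟨r, by omega⟩
        (Nat.odd_iff.2 (by omega))) hfji
    · let k : Fin n := ⟨r, by omega⟩
      rcases hadj with h | h
      · exact hD.exists_apply_eq_C_mul hf (p₀ := a k) (q₀ := 0)
          (by rw [stairD_apply_eq_Wv_pow (k := k) (by simp [k]; omega) hr, pow_zero, mul_one])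
      · exact hD.exists_apply_eq_C_mul hf (p₀ := 0) (q₀ := b k)
          (by rw [stairD_apply_eq_Zv_pow (k := k) (by simp [k]; omega) hr, pow_zero, one_mul])
  choose c hc using hentry
  exact ⟨c, Matrix.ext hc⟩

end ChainMap

/-- Every chain map `f : S → S` of bidegree `(−1,−1)` on a bigraded staircase complex
over `F₂[W,Z]` is null-homotopic: `f = d∘H + H∘d` for some module map `H`. -/
theorem stmt_8 (n : ℕ) (a b : Fin n → ℕ) (ha : ∀ i, 0 < a i) (hb : ∀ i, 0 < b i)
    (grW grZ : Fin (2 * n + 1) → ℤ)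
    (hD : hasBideg grW grZ grW grZ (-1) (-1) (stairD n a b))
    (f : Matrix (Fin (2 * n + 1)) (Fin (2 * n + 1)) R2)
    (hf : hasBideg grW grZ grW grZ (-1) (-1) f)
    (hchain : f * stairD n a b = stairD n a b * f) :
    ∃ H : Matrix (Fin (2 * n + 1)) (Fin (2 * n + 1)) R2,
      f = stairD n a b * H + H * stairD n a b := by
  obtain ⟨c, rfl⟩ := exists_map_C_hadamard_stairD_eq ha hb hD hf hchain
  obtain ⟨h, hh⟩ := exists_hadamard_eq_mul_diagonal_add_diagonal_mul (c.map C) (stairD n a b)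
    fun _ _ => stairD_apply_ne_zero_iff.1
  exact ⟨diagonal h, hh⟩
end
end

section
/- Let X and C be chain complexes over a commutative ring of characteristic 2, and suppose Π: X → C and I: C → X are chain maps with Π∘I = id_C and I∘Π = id_X + d(Q) for some homotopy Q: X → X (where d(Q) = d_X∘Q + Q∘d_X). Define Q' = (1 + I∘Π)∘Q∘(1 + I∘Π) and H = Q'∘d_X∘Q'. Then (Π, I, H) is a strong deformation retraction: Π∘I = id_C, I∘Π = id_X + d(H), H∘H = 0, H∘I = 0, and Π∘H = 0. -/
/-!
Put `e = 1 + IΠ`; in characteristic 2 this is the projector `1 - IΠ` onto the kernel of `Π`, it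
commutes with `d`, and `I∘Π = 1 + d(Q)` says `d(Q) = e`. Conjugating by `e` keeps `d(Q') = e` and
makes `Q'` absorb `e` on both sides, which kills `H∘I` and `Π∘H`. For any `q` with `d(q) = e` and
`e q = q = q e` one has `d q d = e d`, from which `d(q d q) = e` and `(q d q)² = 0` follow by
expanding; this is a computation in the endomorphism ring, valid in any ring.
-/

theorem add_self_eq_zero_of_charTwo (R : Type*) {M : Type*} [Ring R] [CharP R 2] [AddCommGroup M]
    [Module R M] (x : M) : x + x = 0 := by
  rw [← two_smul R x, CharTwo.two_eq_zero, zero_smul]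

theorem add_self_add_of_charTwo (R : Type*) {M : Type*} [Ring R] [CharP R 2] [AddCommGroup M]
    [Module R M] (x y : M) : x + (x + y) = y := by
  rw [← add_assoc, add_self_eq_zero_of_charTwo R, zero_add]

section HomotopyRing

variable {A : Type*} [Ring A] {d e q : A}

theorem IsIdempotentElem.mul_conj (he : IsIdempotentElem e) : e * (e * q * e) = e * q * e := by
  rw [← mul_assoc, ← mul_assoc, he.eq]

theorem IsIdempotentElem.conj_mul (he : IsIdempotentElem e) : e * q * e * e = e * q * e := by
  rw [mul_assoc, he.eq]

theorem IsIdempotentElem.conj_homotopy_eq (he : IsIdempotentElem e) (hde : Commute d e)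
    (hq : d * q + q * d = e) : d * (e * q * e) + e * q * e * d = e := by
  have hleft : d * (e * q * e) = e * (d * q) * e := by simp only [← mul_assoc, hde.eq]
  have hright : e * q * e * d = e * (q * d) * e := by simp only [mul_assoc, hde.eq]
  rw [hleft, hright, ← add_mul, ← mul_add, hq, he.eq, he.eq]

theorem mul_homotopy_mul_eq (hd : d * d = 0) (hq : d * q + q * d = e) : d * q * d = e * d := by
  rw [eq_sub_of_add_eq hq, sub_mul, mul_assoc, hd, mul_zero, sub_zero]

theorem sandwich_homotopy_eq (hd : d * d = 0) (hde : Commute d e) (heq : e * q = q)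
    (hqe : q * e = q) (hq : d * q + q * d = e) : d * (q * (d * q)) + q * (d * q) * d = e := by
  calc d * (q * (d * q)) + q * (d * q) * d = d * q * d * q + q * (d * q * d) := by noncomm_ring
    _ = d * (e * q) + q * e * d := by
        rw [mul_homotopy_mul_eq hd hq, ← mul_assoc q e d, ← hde.eq, mul_assoc d e q]
    _ = e := by rw [heq, hqe, hq]

theorem sandwich_mul_self_eq_zero (hd : d * d = 0) (heq : e * q = q) (hqe : q * e = q)
    (hq : d * q + q * d = e) : q * (d * q) * (q * (d * q)) = 0 := by
  have hdqqd : d * q * (q * d) = 0 := by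
    calc d * q * (q * d) = (e - q * d) * (q * d) := by rw [eq_sub_of_add_eq hq]
      _ = e * q * d - q * (d * q * d) := by noncomm_ring
      _ = 0 := by rw [mul_homotopy_mul_eq hd hq, heq, ← mul_assoc, hqe, sub_self]
  calc q * (d * q) * (q * (d * q)) = q * (d * q * (q * d)) * q := by noncomm_ring
    _ = 0 := by rw [hdqqd, mul_zero, zero_mul]

end HomotopyRing

namespace LinearMap

variable {R M N : Type*} [CommRing R] [AddCommGroup M] [AddCommGroup N] [Module R M] [Module R N]
  {P : M →ₗ[R] N} {I : N →ₗ[R] M}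

theorem commute_id_add_comp {dM : M →ₗ[R] M} {dN : N →ₗ[R] N} (hP : dN ∘ₗ P = P ∘ₗ dM)
    (hI : dM ∘ₗ I = I ∘ₗ dN) : Commute dM (id + I ∘ₗ P) := by
  refine (Commute.one_right dM).add_right ?_
  change dM ∘ₗ I ∘ₗ P = (I ∘ₗ P) ∘ₗ dM
  rw [← comp_assoc, hI, comp_assoc, hP, comp_assoc]

theorem isIdempotentElem_comp_of_comp_eq_id (hPI : P ∘ₗ I = id) : IsIdempotentElem (I ∘ₗ P) := by
  change I ∘ₗ (P ∘ₗ I) ∘ₗ P = I ∘ₗ P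
  rw [hPI, id_comp]

variable [CharP R 2]

theorem isIdempotentElem_id_add_comp (hPI : P ∘ₗ I = id) : IsIdempotentElem (id + I ∘ₗ P) := by
  rw [← neg_eq_of_add_eq_zero_right (add_self_eq_zero_of_charTwo R (I ∘ₗ P)), ← sub_eq_add_neg]
  exact (isIdempotentElem_comp_of_comp_eq_id hPI).one_sub

theorem id_add_comp_comp_eq_zero (hPI : P ∘ₗ I = id) : (id + I ∘ₗ P) ∘ₗ I = 0 := by
  rw [add_comp, comp_assoc, hPI, comp_id, id_comp, add_self_eq_zero_of_charTwo R]

theorem comp_id_add_comp_eq_zero (hPI : P ∘ₗ I = id) : P ∘ₗ (id + I ∘ₗ P) = 0 := by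
  rw [comp_add, ← comp_assoc, hPI, id_comp, comp_id, add_self_eq_zero_of_charTwo R]

end LinearMap

theorem stmt_9_general {R X C : Type*} [CommRing R] [CharP R 2]
    [AddCommGroup X] [AddCommGroup C] [Module R X] [Module R C]
    (dX : X →ₗ[R] X) (dC : C →ₗ[R] C)
    (hdX : dX ∘ₗ dX = 0)
    (P : X →ₗ[R] C) (I : C →ₗ[R] X)
    (hP : dC ∘ₗ P = P ∘ₗ dX) (hI : dX ∘ₗ I = I ∘ₗ dC)
    (hPI : P ∘ₗ I = LinearMap.id)
    (Q : X →ₗ[R] X)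
    (hIP : I ∘ₗ P = LinearMap.id + (dX ∘ₗ Q + Q ∘ₗ dX)) :
    letI Q' : X →ₗ[R] X :=
      (LinearMap.id + I ∘ₗ P) ∘ₗ Q ∘ₗ (LinearMap.id + I ∘ₗ P)
    letI H : X →ₗ[R] X := Q' ∘ₗ dX ∘ₗ Q'
    P ∘ₗ I = LinearMap.id ∧
    I ∘ₗ P = LinearMap.id + (dX ∘ₗ H + H ∘ₗ dX) ∧
    H ∘ₗ H = 0 ∧ H ∘ₗ I = 0 ∧ P ∘ₗ H = 0 := by
  set e : X →ₗ[R] X := LinearMap.id + I ∘ₗ P with he_def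
  set Q' : X →ₗ[R] X := e ∘ₗ Q ∘ₗ e
  have he : IsIdempotentElem e := LinearMap.isIdempotentElem_id_add_comp hPI
  have hde : Commute dX e := LinearMap.commute_id_add_comp hP hI
  have hQ : dX * Q + Q * dX = e := by rw [he_def, hIP, add_self_add_of_charTwo R]; rfl
  have hQ' : dX * Q' + Q' * dX = e := he.conj_homotopy_eq hde hQ
  have heQ' : e * Q' = Q' := he.mul_conj
  have hQ'e : Q' * e = Q' := he.conj_mul
  have heI : e ∘ₗ I = 0 := LinearMap.id_add_comp_comp_eq_zero hPI
  have hPe : P ∘ₗ e = 0 := LinearMap.comp_id_add_comp_eq_zero hPI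
  refine ⟨hPI, ?_, sandwich_mul_self_eq_zero hdX heQ' hQ'e hQ', ?_, ?_⟩
  · change I ∘ₗ P = LinearMap.id + (dX * (Q' * (dX * Q')) + Q' * (dX * Q') * dX)
    rw [sandwich_homotopy_eq hdX hde heQ' hQ'e hQ', he_def, add_self_add_of_charTwo R]
  · change (Q' ∘ₗ dX ∘ₗ e ∘ₗ Q ∘ₗ e) ∘ₗ I = 0
    simp only [LinearMap.comp_assoc, heI, LinearMap.comp_zero]
  · change P ∘ₗ (e ∘ₗ Q ∘ₗ e) ∘ₗ dX ∘ₗ Q' = 0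
    simp only [← LinearMap.comp_assoc, hPe, LinearMap.zero_comp]

/-- Lambe–Stasheff side conditions: if `Π∘I = id` and `I∘Π = id + d(Q)` for chain
complexes over a commutative ring of characteristic 2, then with
`Q' = (1 + IΠ)∘Q∘(1 + IΠ)` and `H = Q'∘d∘Q'` the data `(Π, I, H)` is a strong
deformation retraction. -/
theorem stmt_9 {R X C : Type*} [CommRing R] [CharP R 2]
    [AddCommGroup X] [AddCommGroup C] [Module R X] [Module R C]
    (dX : X →ₗ[R] X) (dC : C →ₗ[R] C)
    (hdX : dX ∘ₗ dX = 0) (hdC : dC ∘ₗ dC = 0)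
    (P : X →ₗ[R] C) (I : C →ₗ[R] X)
    (hP : dC ∘ₗ P = P ∘ₗ dX) (hI : dX ∘ₗ I = I ∘ₗ dC)
    (hPI : P ∘ₗ I = LinearMap.id)
    (Q : X →ₗ[R] X)
    (hIP : I ∘ₗ P = LinearMap.id + (dX ∘ₗ Q + Q ∘ₗ dX)) :
    letI Q' : X →ₗ[R] X :=
      (LinearMap.id + I ∘ₗ P) ∘ₗ Q ∘ₗ (LinearMap.id + I ∘ₗ P)
    letI H : X →ₗ[R] X := Q' ∘ₗ dX ∘ₗ Q'
    P ∘ₗ I = LinearMap.id ∧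
    I ∘ₗ P = LinearMap.id + (dX ∘ₗ H + H ∘ₗ dX) ∧
    H ∘ₗ H = 0 ∧ H ∘ₗ I = 0 ∧ P ∘ₗ H = 0 :=
  stmt_9_general dX dC hdX P I hP hI hPI Q hIP
end
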